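/- arXiv:0908.3865 — 6 statements merged into one kernel-verified Lean document; each statement's English description precedes it below -/
import Mathlib

section
/- Let A be a difference integral domain. Then the following conditions are equivalent: (B1) for every n, every proper perfect difference ideal of A{y₁,…,yₙ} has a common zero in Aⁿ; (B2) for every n and every subset E ⊆ A{y₁,…,yₙ}, if E has a common zero in Bⁿ for some difference integral domain B containing A, then E has a common zero in Aⁿ; (B2') the same as (B2) with 'difference integral domain' replaced by 'difference field'. -/
open MvPolynomial

universe u v

variable {G : Type u} [Group G]

noncomputable def diffAct {A : Type v} [CommRing A] [MulSemiringAction G A] {n : ℕ} (σ : G) :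
    MvPolynomial (G × Fin n) A →+* MvPolynomial (G × Fin n) A :=
  (MvPolynomial.rename (Prod.map (fun τ => σ * τ) id)).toRingHom.comp
    (MvPolynomial.map (MulSemiringAction.toRingHom G A σ))

def IsDiffIdeal {A : Type v} [CommRing A] [MulSemiringAction G A] {n : ℕ}
    (I : Ideal (MvPolynomial (G × Fin n) A)) : Prop :=
  ∀ σ : G, ∀ f ∈ I, diffAct σ f ∈ I

def IsPerfectDiffIdeal {A : Type v} [CommRing A] [MulSemiringAction G A] {n : ℕ}
    (I : Ideal (MvPolynomial (G × Fin n) A)) : Prop :=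
  IsDiffIdeal I ∧
    ∀ (f : MvPolynomial (G × Fin n) A) (m : ℕ) (σ : Fin m → G) (k : Fin m → ℕ),
      (∀ i, 1 ≤ k i) → (∏ i, (diffAct (σ i) f) ^ k i) ∈ I → f ∈ I

def IsStableIdeal (G : Type u) [Group G] {R : Type v} [CommRing R] [MulSemiringAction G R] (I : Ideal R) : Prop :=
  ∀ σ : G, ∀ a ∈ I, σ • a ∈ I

def IsPerfectIdeal (G : Type u) [Group G] {R : Type v} [CommRing R] [MulSemiringAction G R] (I : Ideal R) : Prop :=
  IsStableIdeal G I ∧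
    ∀ (a : R) (m : ℕ) (σ : Fin m → G) (k : Fin m → ℕ),
      (∀ i, 1 ≤ k i) → (∏ i, (σ i • a) ^ k i) ∈ I → a ∈ I

def IsSimpleDiffRing (G : Type u) (R : Type v) [Group G] [CommRing R] [MulSemiringAction G R] : Prop :=
  Nontrivial R ∧ ∀ I : Ideal R, IsStableIdeal G I → I = ⊥ ∨ I = ⊤

def IsPseudofield (G : Type u) (R : Type v) [Group G] [CommRing R] [MulSemiringAction G R] : Prop :=
  IsSimpleDiffRing G R ∧ ∀ a : R, ∃ x : R, a * x * a = a

structure DiffRingExt (G : Type u) [Group G] : Type (max u (v + 1)) where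
  carrier : Type v
  [ring : CommRing carrier]
  [act : MulSemiringAction G carrier]

attribute [instance] DiffRingExt.ring DiffRingExt.act

structure DiffDomainExt (G : Type u) [Group G] : Type (max u (v + 1)) where
  carrier : Type v
  [ring : CommRing carrier]
  [dom : IsDomain carrier]
  [act : MulSemiringAction G carrier]

attribute [instance] DiffDomainExt.ring DiffDomainExt.dom DiffDomainExt.act

structure DiffFieldExt (G : Type u) [Group G] : Type (max u (v + 1)) where
  carrier : Type v
  [field : Field carrier]
  [act : MulSemiringAction G carrier]

attribute [instance] DiffFieldExt.field DiffFieldExt.act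

/-!
(B2) ⇒ (B2') is trivial, and (B2') ⇒ (B2) passes to the fraction field, to which the action
extends. For (B1) ⇒ (B2), the difference polynomials vanishing at a zero in a difference domain
form a proper perfect difference ideal. For (B2) ⇒ (B1), applying (B2) to `a y = 1` shows that
`A` is a field. A proper perfect difference ideal is well-mixed (`ab ∈ 𝔞 → a σ(b) ∈ 𝔞`), so by
Zorn it lies in a maximal proper well-mixed difference ideal, and such an ideal is prime. The
quotient by it is a difference domain containing `A`, where the classes of the variables `y_i`
form a common zero of the ideal.
-/

section DiffRing

variable {R : Type v} [CommRing R] [MulSemiringAction G R]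

variable (G) in
def IsWellMixedIdeal (I : Ideal R) : Prop :=
  ∀ (a b : R) (σ : G), a * b ∈ I → a * σ • b ∈ I

theorem IsPerfectIdeal.isWellMixedIdeal {I : Ideal R} (hI : IsPerfectIdeal G I) :
    IsWellMixedIdeal G I := by
  intro a b σ hab
  -- `(a · σb) · σ⁻¹(a · σb) = (a b) · (σb · σ⁻¹a)`
  refine hI.2 (a * σ • b) 2 ![1, σ⁻¹] ![1, 1] (by simp [Fin.forall_fin_two]) ?_
  have hprod : ∏ i, ((![1, σ⁻¹] : Fin 2 → G) i • (a * σ • b)) ^ (![1, 1] : Fin 2 → ℕ) i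
      = a * b * (σ • b * σ⁻¹ • a) := by
    simp only [Fin.prod_univ_two, Matrix.cons_val_zero, Matrix.cons_val_one, pow_one, one_smul,
      smul_mul', inv_smul_smul]
    ring
  rw [hprod]
  exact I.mul_mem_right _ hab

theorem exists_le_maximal_isWellMixedIdeal {I : Ideal R} (hI : I ≠ ⊤)
    (hst : IsStableIdeal G I) (hwm : IsWellMixedIdeal G I) :
    ∃ M, I ≤ M ∧
      Maximal (fun J : Ideal R => J ≠ ⊤ ∧ IsStableIdeal G J ∧ IsWellMixedIdeal G J) M := by
  refine zorn_le_nonempty₀ _ (fun c hc hchain J hJ => ?_) I ⟨hI, hst, hwm⟩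
  have hmem : ∀ a, a ∈ sSup c ↔ ∃ K ∈ c, a ∈ K := fun a =>
    Submodule.mem_sSup_of_directed ⟨J, hJ⟩ hchain.directedOn
  refine ⟨sSup c, ⟨?_, ?_, ?_⟩, fun K hK => le_sSup hK⟩
  · rw [Ne, Ideal.eq_top_iff_one, hmem]
    rintro ⟨K, hK, h1⟩
    exact (hc hK).1 ((Ideal.eq_top_iff_one K).2 h1)
  · intro σ a ha
    obtain ⟨K, hK, haK⟩ := (hmem a).1 ha
    exact (hmem _).2 ⟨K, hK, (hc hK).2.1 σ a haK⟩
  · intro a b σ hab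
    obtain ⟨K, hK, habK⟩ := (hmem _).1 hab
    exact (hmem _).2 ⟨K, hK, (hc hK).2.2 a b σ habK⟩

theorem Maximal.isPrime_of_isWellMixedIdeal {P : Ideal R}
    (hP : Maximal (fun J : Ideal R => J ≠ ⊤ ∧ IsStableIdeal G J ∧ IsWellMixedIdeal G J) P) :
    P.IsPrime := by
  obtain ⟨⟨hne, -, hwm⟩, hmax⟩ := hP
  refine ⟨hne, fun {x y} hxy => or_iff_not_imp_right.2 fun hy => ?_⟩
  -- Well-mixedness makes the colon ideal `P : x` a stable well-mixed ideal; it contains `y ∉ P`.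
  let K := P.colon {x}
  have hK : ∀ r, r ∈ K ↔ x * r ∈ P := fun r => by simp [K, mul_comm]
  have hKst : IsStableIdeal G K := fun σ r hr => (hK _).2 (hwm x r σ ((hK r).1 hr))
  have hKwm : IsWellMixedIdeal G K := fun a b σ hab => (hK _).2 <| by
    simpa only [mul_assoc] using hwm (x * a) b σ (by simpa only [mul_assoc] using (hK _).1 hab)
  have hPK : P ≤ K := fun r hr => (hK r).2 (P.mul_mem_left x hr)
  have hKtop : K = ⊤ := by
    by_contra hKne
    exact hy (hmax ⟨hKne, hKst, hKwm⟩ hPK ((hK y).2 hxy))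
  simpa using (hK 1).1 (hKtop ▸ Submodule.mem_top)

theorem IsPerfectIdeal.exists_le_isPrime {I : Ideal R} (hI : IsPerfectIdeal G I) (hne : I ≠ ⊤) :
    ∃ P : Ideal R, P.IsPrime ∧ IsStableIdeal G P ∧ I ≤ P := by
  obtain ⟨P, hIP, hP⟩ := exists_le_maximal_isWellMixedIdeal hne hI.1 hI.isWellMixedIdeal
  exact ⟨P, hP.isPrime_of_isWellMixedIdeal, hP.1.2.1, hIP⟩

abbrev Ideal.quotientMulSemiringAction (I : Ideal R) (hI : IsStableIdeal G I) :
    MulSemiringAction G (R ⧸ I) where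
  smul σ := Ideal.quotientMap I (MulSemiringAction.toRingHom G R σ) fun a ha => hI σ a ha
  one_smul := by
    rintro ⟨a⟩
    exact congrArg (Ideal.Quotient.mk I) (one_smul G a)
  mul_smul σ τ := by
    rintro ⟨a⟩
    exact congrArg (Ideal.Quotient.mk I) (mul_smul σ τ a)
  smul_zero _ := map_zero _
  smul_add _ := map_add _
  smul_one _ := map_one _
  smul_mul _ := map_mul _

end DiffRing

section DiffPoly

variable {A : Type v} [CommRing A] [MulSemiringAction G A] {n : ℕ}

theorem diffAct_C (σ : G) (a : A) : diffAct (n := n) σ (C a) = C (σ • a) := by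
  simp only [diffAct, RingHom.comp_apply, map_C, AlgHom.toRingHom_eq_coe, RingHom.coe_coe,
    rename_C]
  rfl

theorem diffAct_X (σ : G) (p : G × Fin n) : diffAct (A := A) σ (X p) = X (σ * p.1, p.2) := by
  simp [diffAct, Prod.map]

theorem diffAct_one (f : MvPolynomial (G × Fin n) A) : diffAct (1 : G) f = f := by
  induction f using MvPolynomial.induction_on with
  | C a => simp [diffAct_C]
  | add f g hf hg => rw [map_add, hf, hg]
  | mul_X f p hf => rw [map_mul, hf, diffAct_X, one_mul]

theorem diffAct_diffAct (σ τ : G) (f : MvPolynomial (G × Fin n) A) :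
    diffAct σ (diffAct τ f) = diffAct (σ * τ) f := by
  induction f using MvPolynomial.induction_on with
  | C a => simp [diffAct_C, mul_smul]
  | add f g hf hg => rw [map_add, map_add, map_add, hf, hg]
  | mul_X f p hf => simp only [map_mul, hf, diffAct_X, mul_assoc]

-- Not an instance: `MvPolynomial` already carries the coefficientwise action of `G`.
noncomputable abbrev diffMulSemiringAction :
    MulSemiringAction G (MvPolynomial (G × Fin n) A) where
  smul σ := diffAct σ
  one_smul := diffAct_one
  mul_smul σ τ f := (diffAct_diffAct σ τ f).symm
  smul_zero σ := map_zero (diffAct σ)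
  smul_add σ := map_add (diffAct σ)
  smul_one σ := map_one (diffAct σ)
  smul_mul σ := map_mul (diffAct σ)

theorem IsPerfectDiffIdeal.exists_le_isPrime {𝔞 : Ideal (MvPolynomial (G × Fin n) A)}
    (h𝔞 : IsPerfectDiffIdeal 𝔞) (hne : 𝔞 ≠ ⊤) :
    ∃ 𝔭 : Ideal (MvPolynomial (G × Fin n) A), 𝔭.IsPrime ∧ IsDiffIdeal 𝔭 ∧ 𝔞 ≤ 𝔭 :=
  letI := diffMulSemiringAction (G := G) (A := A) (n := n)
  IsPerfectIdeal.exists_le_isPrime (G := G) h𝔞 hne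

noncomputable abbrev IsDiffIdeal.quotientMulSemiringAction
    {𝔭 : Ideal (MvPolynomial (G × Fin n) A)} (h𝔭 : IsDiffIdeal 𝔭) :
    MulSemiringAction G (MvPolynomial (G × Fin n) A ⧸ 𝔭) :=
  letI := diffMulSemiringAction (G := G) (A := A) (n := n)
  Ideal.quotientMulSemiringAction 𝔭 h𝔭

end DiffPoly

section DiffZeros

variable {A : Type v} [CommRing A] {n : ℕ}

theorem eval₂_comp_equivariant {B C : Type*} [CommSemiring B] [CommSemiring C]
    [MulSemiringAction G B] [MulSemiringAction G C] (φ : A →+* B) (ψ : B →+* C)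
    (hψ : ∀ (σ : G) (b : B), ψ (σ • b) = σ • ψ b) (x : Fin n → B)
    (f : MvPolynomial (G × Fin n) A) :
    eval₂ (ψ.comp φ) (fun p : G × Fin n => p.1 • ψ (x p.2)) f
      = ψ (eval₂ φ (fun p : G × Fin n => p.1 • x p.2) f) := by
  rw [eval₂_comp_left]
  congr 1
  funext p
  exact (hψ p.1 (x p.2)).symm

variable [MulSemiringAction G A]

theorem eval₂_diffAct {B : Type*} [CommSemiring B] [MulSemiringAction G B] (φ : A →+* B)
    (hφ : ∀ (σ : G) (a : A), φ (σ • a) = σ • φ a) (x : Fin n → B) (σ : G)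
    (f : MvPolynomial (G × Fin n) A) :
    eval₂ φ (fun p : G × Fin n => p.1 • x p.2) (diffAct σ f)
      = σ • eval₂ φ (fun p : G × Fin n => p.1 • x p.2) f := by
  induction f using MvPolynomial.induction_on with
  | C a => simp only [diffAct_C, eval₂_C, hφ]
  | add f g hf hg => rw [map_add, eval₂_add, eval₂_add, hf, hg, smul_add]
  | mul_X f p hf => rw [map_mul, eval₂_mul, eval₂_mul, hf, diffAct_X, eval₂_X, eval₂_X,
      smul_mul', mul_smul]

theorem isPerfectDiffIdeal_ker_eval₂ {B : Type*} [CommRing B] [IsDomain B]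
    [MulSemiringAction G B] (φ : A →+* B) (hφ : ∀ (σ : G) (a : A), φ (σ • a) = σ • φ a)
    (x : Fin n → B) :
    IsPerfectDiffIdeal (RingHom.ker (eval₂Hom φ fun p : G × Fin n => p.1 • x p.2)) := by
  refine ⟨fun σ f hf => ?_, fun f m σ k _ hprod => ?_⟩
  · simp only [RingHom.mem_ker, coe_eval₂Hom] at hf ⊢
    rw [eval₂_diffAct φ hφ, hf, smul_zero]
  · simp only [RingHom.mem_ker, map_prod, map_pow, coe_eval₂Hom, eval₂_diffAct φ hφ] at hprod ⊢
    obtain ⟨i, -, hi⟩ := Finset.prod_eq_zero_iff.1 hprod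
    exact (smul_eq_zero_iff_eq (σ i)).1 (eq_zero_of_pow_eq_zero hi)

theorem IsDiffIdeal.eval₂_mk_comp_C {𝔭 : Ideal (MvPolynomial (G × Fin n) A)}
    (h𝔭 : IsDiffIdeal 𝔭) (f : MvPolynomial (G × Fin n) A) :
    letI := h𝔭.quotientMulSemiringAction
    eval₂ ((Ideal.Quotient.mk 𝔭).comp C)
        (fun p : G × Fin n => p.1 • Ideal.Quotient.mk 𝔭 (X (1, p.2))) f
      = Ideal.Quotient.mk 𝔭 f := by
  let := diffMulSemiringAction (G := G) (A := A) (n := n)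
  let := h𝔭.quotientMulSemiringAction
  refine (eval₂_comp_equivariant C (Ideal.Quotient.mk 𝔭) (fun _ _ => rfl)
    (fun i => X (1, i)) f).trans ?_
  congr 1
  conv_rhs => rw [← eval₂_eta f]
  congr 1
  funext p
  exact (diffAct_X p.1 (1, p.2)).trans (by rw [mul_one])

end DiffZeros

section Conditions

variable (G) (A : Type u) [CommRing A] [MulSemiringAction G A]

def PerfectIdealsHaveZeros : Prop :=
  ∀ (n : ℕ) (𝔞 : Ideal (MvPolynomial (G × Fin n) A)), IsPerfectDiffIdeal 𝔞 → 𝔞 ≠ ⊤ →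
    ∃ x : Fin n → A, ∀ f ∈ 𝔞, aeval (fun p : G × Fin n => p.1 • x p.2) f = 0

def ZerosDescendFromDomains : Prop :=
  ∀ (n : ℕ) (E : Set (MvPolynomial (G × Fin n) A)),
    (∃ (B : DiffDomainExt.{u, u} G) (φ : A →+* B.carrier),
        Function.Injective φ ∧ (∀ (σ : G) (a : A), φ (σ • a) = σ • φ a) ∧
        ∃ x : Fin n → B.carrier,
          ∀ f ∈ E, MvPolynomial.eval₂ φ (fun p : G × Fin n => p.1 • x p.2) f = 0) →
    ∃ x : Fin n → A, ∀ f ∈ E, aeval (fun p : G × Fin n => p.1 • x p.2) f = 0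

def ZerosDescendFromFields : Prop :=
  ∀ (n : ℕ) (E : Set (MvPolynomial (G × Fin n) A)),
    (∃ (B : DiffFieldExt.{u, u} G) (φ : A →+* B.carrier),
        Function.Injective φ ∧ (∀ (σ : G) (a : A), φ (σ • a) = σ • φ a) ∧
        ∃ x : Fin n → B.carrier,
          ∀ f ∈ E, MvPolynomial.eval₂ φ (fun p : G × Fin n => p.1 • x p.2) f = 0) →
    ∃ x : Fin n → A, ∀ f ∈ E, aeval (fun p : G × Fin n => p.1 • x p.2) f = 0

variable {G A}

theorem ZerosDescendFromDomains.of_perfectIdealsHaveZeros (h : PerfectIdealsHaveZeros G A) :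
    ZerosDescendFromDomains G A := by
  rintro n E ⟨B, φ, -, hφ, x, hx⟩
  obtain ⟨y, hy⟩ := h n _ (isPerfectDiffIdeal_ker_eval₂ φ hφ x) (RingHom.ker_ne_top _)
  exact ⟨y, fun f hf => hy f (hx f hf)⟩

theorem ZerosDescendFromDomains.zerosDescendFromFields (h : ZerosDescendFromDomains G A) :
    ZerosDescendFromFields G A := by
  rintro n E ⟨B, φ, hinj, hφ, x, hx⟩
  exact h n E ⟨⟨B.carrier⟩, φ, hinj, hφ, x, hx⟩

theorem ZerosDescendFromDomains.of_zerosDescendFromFields (h : ZerosDescendFromFields G A) :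
    ZerosDescendFromDomains G A := by
  rintro n E ⟨B, φ, hinj, hφ, x, hx⟩
  let := IsFractionRing.mulSemiringAction G B.carrier (FractionRing B.carrier)
  let ι := algebraMap B.carrier (FractionRing B.carrier)
  have hι : ∀ (σ : G) (b : B.carrier), ι (σ • b) = σ • ι b := fun σ b => algebraMap.smul' σ b _
  refine h n E ⟨⟨FractionRing B.carrier⟩, ι.comp φ, (IsFractionRing.injective _ _).comp hinj,
    fun σ a => by simp only [RingHom.comp_apply, hφ, hι], fun i => ι (x i), fun f hf => ?_⟩
  rw [eval₂_comp_equivariant φ ι hι, hx f hf, map_zero]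

theorem ZerosDescendFromDomains.isField [IsDomain A] (h : ZerosDescendFromDomains G A) :
    IsField A := by
  refine ⟨exists_pair_ne A, mul_comm, fun {a} ha => ?_⟩
  let := IsFractionRing.mulSemiringAction G A (FractionRing A)
  let ι := algebraMap A (FractionRing A)
  have hιa : ι a ≠ 0 := (map_ne_zero_iff ι (IsFractionRing.injective _ _)).2 ha
  -- `a⁻¹` solves `a y = 1` in the fraction field, hence `a y = 1` is solvable in `A`.
  obtain ⟨y, hy⟩ := h 1 {C a * X (1, 0) - 1}
    ⟨⟨FractionRing A⟩, ι, IsFractionRing.injective _ _, fun σ b => algebraMap.smul' σ b _,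
      fun _ => (ι a)⁻¹, by simp [hιa]⟩
  exact ⟨y 0, by simpa [sub_eq_zero] using hy _ rfl⟩

theorem PerfectIdealsHaveZeros.of_zerosDescendFromDomains [IsDomain A]
    (h : ZerosDescendFromDomains G A) : PerfectIdealsHaveZeros G A := by
  intro n 𝔞 h𝔞 hne
  obtain ⟨𝔭, h𝔭, hdiff, h𝔞𝔭⟩ := h𝔞.exists_le_isPrime hne
  let := hdiff.quotientMulSemiringAction
  let φ := (Ideal.Quotient.mk 𝔭).comp (C : A →+* MvPolynomial (G × Fin n) A)
  have hinj : Function.Injective φ := by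
    rw [RingHom.injective_iff_ker_eq_bot]
    exact ((Ring.isField_iff_maximal_bot.1 h.isField).eq_of_le (RingHom.ker_ne_top φ)
      bot_le).symm
  have hφ : ∀ (σ : G) (a : A), φ (σ • a) = σ • φ a := fun σ a =>
    congrArg (Ideal.Quotient.mk 𝔭) (diffAct_C σ a).symm
  refine h n 𝔞 ⟨⟨_ ⧸ 𝔭⟩, φ, hinj, hφ, fun i => Ideal.Quotient.mk 𝔭 (X (1, i)), fun f hf => ?_⟩
  rw [hdiff.eval₂_mk_comp_C, Ideal.Quotient.eq_zero_iff_mem]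
  exact h𝔞𝔭 hf

end Conditions

/-- For a difference integral domain `A` the conditions (B1), (B2) and (B2') are
equivalent. -/
theorem stmt3 {G A : Type u} [Group G] [CommRing A] [IsDomain A] [MulSemiringAction G A] :
    -- (B1)
    ((∀ (n : ℕ) (𝔞 : Ideal (MvPolynomial (G × Fin n) A)), IsPerfectDiffIdeal 𝔞 → 𝔞 ≠ ⊤ →
        ∃ x : Fin n → A, ∀ f ∈ 𝔞, aeval (fun p : G × Fin n => p.1 • x p.2) f = 0)
      ↔
    -- (B2)
      (∀ (n : ℕ) (E : Set (MvPolynomial (G × Fin n) A)),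
        (∃ (B : DiffDomainExt.{u, u} G) (φ : A →+* B.carrier),
            Function.Injective φ ∧ (∀ (σ : G) (a : A), φ (σ • a) = σ • φ a) ∧
            ∃ x : Fin n → B.carrier,
              ∀ f ∈ E, MvPolynomial.eval₂ φ (fun p : G × Fin n => p.1 • x p.2) f = 0) →
        ∃ x : Fin n → A, ∀ f ∈ E, aeval (fun p : G × Fin n => p.1 • x p.2) f = 0))
    ∧
    -- (B2) ↔ (B2')
    ((∀ (n : ℕ) (E : Set (MvPolynomial (G × Fin n) A)),
        (∃ (B : DiffDomainExt.{u, u} G) (φ : A →+* B.carrier),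
            Function.Injective φ ∧ (∀ (σ : G) (a : A), φ (σ • a) = σ • φ a) ∧
            ∃ x : Fin n → B.carrier,
              ∀ f ∈ E, MvPolynomial.eval₂ φ (fun p : G × Fin n => p.1 • x p.2) f = 0) →
        ∃ x : Fin n → A, ∀ f ∈ E, aeval (fun p : G × Fin n => p.1 • x p.2) f = 0)
      ↔
      (∀ (n : ℕ) (E : Set (MvPolynomial (G × Fin n) A)),
        (∃ (B : DiffFieldExt.{u, u} G) (φ : A →+* B.carrier),
            Function.Injective φ ∧ (∀ (σ : G) (a : A), φ (σ • a) = σ • φ a) ∧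
            ∃ x : Fin n → B.carrier,
              ∀ f ∈ E, MvPolynomial.eval₂ φ (fun p : G × Fin n => p.1 • x p.2) f = 0) →
        ∃ x : Fin n → A, ∀ f ∈ E, aeval (fun p : G × Fin n => p.1 • x p.2) f = 0)) := by
  exact ⟨⟨ZerosDescendFromDomains.of_perfectIdealsHaveZeros,
      PerfectIdealsHaveZeros.of_zerosDescendFromDomains⟩,
    ⟨ZerosDescendFromDomains.zerosDescendFromFields,
      ZerosDescendFromDomains.of_zerosDescendFromFields⟩⟩
end

section
/- In a difference ring, every maximal element of the set of proper perfect difference ideals is a prime ideal. -/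
open MvPolynomial

universe u v

variable {G : Type u} [Group G]

/-!
A perfect ideal `P` satisfies `a * b ∈ P → σ • a * b ∈ P`, because `x = σ • a * b` has
`x * σ • x ∈ P`. Consequently the colon ideal `(P : b)` of a perfect ideal is again perfect.
If `I` is maximal perfect, `a * b ∈ I` and `a ∉ I`, then `(I : b)` is a perfect ideal strictly
containing `I`, hence the unit ideal, i.e. `b ∈ I`.
-/

namespace IsPerfectIdeal

variable {R : Type v} [CommRing R] [MulSemiringAction G R] {P : Ideal R}

theorem mem_of_mul_smul_mem (hP : IsPerfectIdeal G P) {x : R} (σ : G) (h : x * (σ • x) ∈ P) :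
    x ∈ P := by
  refine hP.2 x 2 ![1, σ] ![1, 1] (fun i => by fin_cases i <;> simp) ?_
  simpa [Fin.prod_univ_two] using h

theorem smul_mul_mem (hP : IsPerfectIdeal G P) {a b : R} (h : a * b ∈ P) (σ : G) :
    (σ • a) * b ∈ P := by
  have hσ : (σ • a) * (σ • b) ∈ P := by simpa only [smul_mul'] using hP.1 σ _ h
  refine hP.mem_of_mul_smul_mem σ ?_
  have key : σ • a * b * σ • (σ • a * b) = (σ • a * σ • b) * (b * σ • σ • a) := by
    rw [smul_mul']; ring
  rw [key]
  exact P.mul_mem_right _ hσ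

theorem prod_smul_pow_mul_mem (hP : IsPerfectIdeal G P) {a b : R} (h : a * b ∈ P) {m : ℕ}
    (σ : Fin (m + 1) → G) (k : Fin (m + 1) → ℕ) (hk : ∀ i, 1 ≤ k i) :
    (∏ i, (σ i • a) ^ k i) * b ∈ P := by
  obtain ⟨c, hc⟩ : σ 0 • a ∣ ∏ i, (σ i • a) ^ k i :=
    (dvd_pow_self _ (by have := hk 0; omega)).trans (Finset.dvd_prod_of_mem _ (Finset.mem_univ 0))
  rw [hc, mul_right_comm]
  exact P.mul_mem_right _ (hP.smul_mul_mem h (σ 0))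

theorem colon_singleton (hP : IsPerfectIdeal G P) (b : R) : IsPerfectIdeal G (P.colon {b}) := by
  simp only [IsPerfectIdeal, IsStableIdeal, Submodule.mem_colon_singleton, smul_eq_mul]
  refine ⟨fun σ a ha => hP.smul_mul_mem ha σ, fun a m σ k hk hprod => ?_⟩
  rcases m with _ | m
  · rw [Fin.prod_univ_zero, one_mul] at hprod
    exact P.mul_mem_left a hprod
  refine hP.2 (a * b) (m + 1) σ k hk ?_
  have hsplit : ∏ i, (σ i • (a * b)) ^ k i = (∏ i, (σ i • b) ^ k i) * ∏ i, (σ i • a) ^ k i := by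
    simp only [smul_mul', mul_pow, Finset.prod_mul_distrib, mul_comm]
  rw [hsplit]
  exact hP.prod_smul_pow_mul_mem (by rwa [mul_comm]) σ k hk

end IsPerfectIdeal

/-- In a difference ring, every maximal element of the set of proper perfect
difference ideals is prime. -/
theorem stmt4 {G R : Type u} [Group G] [CommRing R] [MulSemiringAction G R]
    (I : Ideal R) (hI : IsPerfectIdeal G I) (hproper : I ≠ ⊤)
    (hmax : ∀ J : Ideal R, IsPerfectIdeal G J → J ≠ ⊤ → I ≤ J → J = I) :
    I.IsPrime := by
  refine ⟨hproper, fun {a b} hab => or_iff_not_imp_left.mpr fun ha => ?_⟩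
  have ha' : a ∈ I.colon {b} := Submodule.mem_colon_singleton.mpr hab
  by_cases htop : I.colon {b} = ⊤
  · simpa using (Submodule.colon_eq_top_iff_subset _).mp htop
  · exact absurd (hmax _ (hI.colon_singleton b) htop Ideal.le_colon ▸ ha') ha
end

section
/- Every simple difference ring can be embedded (by an injective difference homomorphism) into a pseudofield, i.e., into an absolutely flat simple difference ring. -/
open MvPolynomial

universe u v

variable {G : Type u} [Group G]

/-!
Fix a maximal ideal `𝔪` of `R` and put `K = R ⧸ 𝔪`. The Taylor homomorphism
`a ↦ (τ ↦ τ • a mod 𝔪)` into `K^G`, with `G` acting by right translation, is equivariant, hence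
injective because `R` is simple. `K^G` is von Neumann regular, being a product of fields, and so is
its quotient by a maximal proper stable ideal (Zorn), which is a simple difference ring.
-/

def IsVonNeumannRegular (R : Type*) [Semiring R] : Prop :=
  ∀ a : R, ∃ x : R, a * x * a = a

theorem IsField.isVonNeumannRegular {K : Type*} [Semiring K] (hK : IsField K) :
    IsVonNeumannRegular K := by
  intro a
  rcases eq_or_ne a 0 with rfl | ha
  · exact ⟨0, by rw [zero_mul, zero_mul]⟩
  · obtain ⟨b, hb⟩ := hK.mul_inv_cancel ha
    exact ⟨b, by rw [hb, one_mul]⟩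

theorem Pi.isVonNeumannRegular {ι : Type*} {K : ι → Type*} [∀ i, Semiring (K i)]
    (hK : ∀ i, IsVonNeumannRegular (K i)) : IsVonNeumannRegular (∀ i, K i) := by
  intro f
  choose g hg using fun i => hK i (f i)
  exact ⟨g, funext hg⟩

theorem IsVonNeumannRegular.of_surjective {R S : Type*} [Semiring R] [Semiring S]
    (hR : IsVonNeumannRegular R) (f : R →+* S) (hf : Function.Surjective f) :
    IsVonNeumannRegular S := by
  intro b
  obtain ⟨a, rfl⟩ := hf b
  obtain ⟨x, hx⟩ := hR a
  exact ⟨f x, by rw [← map_mul, ← map_mul, hx]⟩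

abbrev rightTranslationAction (K : Type*) [CommRing K] : MulSemiringAction G (G → K) where
  smul σ f τ := f (τ * σ)
  one_smul f := funext fun τ => congrArg f (mul_one τ)
  mul_smul σ τ f := funext fun ρ => congrArg f (mul_assoc ρ σ τ).symm
  smul_zero _ := rfl
  smul_add _ _ _ := rfl
  smul_one _ := rfl
  smul_mul _ _ _ := rfl

attribute [local instance] rightTranslationAction

section Taylor

variable {R K : Type*} [CommRing R] [MulSemiringAction G R] [CommRing K]

variable (G) in
def taylorHom (ψ : R →+* K) : R →+* (G → K) :=
  RingHom.pi fun τ => ψ.comp (MulSemiringAction.toRingHom G R τ)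

theorem taylorHom_smul (ψ : R →+* K) (σ : G) (a : R) :
    taylorHom G ψ (σ • a) = σ • taylorHom G ψ a :=
  funext fun τ => congrArg ψ (mul_smul τ σ a).symm

end Taylor

section StableIdeal

variable {A : Type*} [CommRing A] [MulSemiringAction G A]

theorem isStableIdeal_bot : IsStableIdeal G (⊥ : Ideal A) := by
  intro σ a ha
  rw [Ideal.mem_bot] at ha ⊢
  rw [ha, smul_zero]

theorem exists_maximal_isStableIdeal [Nontrivial A] :
    ∃ I : Ideal A, Maximal (fun J : Ideal A => IsStableIdeal G J ∧ J ≠ ⊤) I := by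
  refine (zorn_le_nonempty₀ {J : Ideal A | IsStableIdeal G J ∧ J ≠ ⊤}
    (fun c hc hchain J hJ => ?_) ⊥ ⟨isStableIdeal_bot, bot_ne_top⟩).imp fun _ hI => hI.2
  have hmem : ∀ {a : A}, a ∈ sSup c ↔ ∃ K ∈ c, a ∈ K :=
    Submodule.mem_sSup_of_directed ⟨J, hJ⟩ hchain.directedOn
  refine ⟨sSup c, ⟨fun σ a ha => ?_, fun htop => ?_⟩, fun K hK => le_sSup hK⟩
  · obtain ⟨K, hK, haK⟩ := hmem.1 ha
    exact hmem.2 ⟨K, hK, (hc hK).1 σ a haK⟩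
  · obtain ⟨K, hK, h1⟩ := hmem.1 (htop ▸ Submodule.mem_top : (1 : A) ∈ sSup c)
    exact (hc hK).2 ((Ideal.eq_top_iff_one K).2 h1)

noncomputable abbrev IsStableIdeal.quotientAction {I : Ideal A} (hI : IsStableIdeal G I) :
    MulSemiringAction G (A ⧸ I) where
  smul σ := Ideal.quotientMap I (MulSemiringAction.toRingHom G A σ) fun a ha => hI σ a ha
  one_smul x := by
    obtain ⟨a, rfl⟩ := Ideal.Quotient.mk_surjective x
    exact congrArg (Ideal.Quotient.mk I) (one_smul G a)
  mul_smul σ τ x := by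
    obtain ⟨a, rfl⟩ := Ideal.Quotient.mk_surjective x
    exact congrArg (Ideal.Quotient.mk I) (mul_smul σ τ a)
  smul_zero _ := map_zero _
  smul_add _ := map_add _
  smul_one _ := map_one _
  smul_mul _ := map_mul _

theorem IsStableIdeal.mk_smul {I : Ideal A} (hI : IsStableIdeal G I) (σ : G) (a : A) :
    letI := hI.quotientAction
    Ideal.Quotient.mk I (σ • a) = σ • Ideal.Quotient.mk I a :=
  rfl

theorem isSimpleDiffRing_quotient {I : Ideal A}
    (hI : Maximal (fun J : Ideal A => IsStableIdeal G J ∧ J ≠ ⊤) I) :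
    letI := hI.prop.1.quotientAction
    IsSimpleDiffRing G (A ⧸ I) := by
  let := hI.prop.1.quotientAction
  refine ⟨Ideal.Quotient.nontrivial_iff.2 hI.prop.2, fun J hJ => ?_⟩
  have hstable : IsStableIdeal G (J.comap (Ideal.Quotient.mk I)) :=
    fun σ a ha => by simpa only [Ideal.mem_comap, hI.prop.1.mk_smul] using hJ σ _ ha
  have hle : I ≤ J.comap (Ideal.Quotient.mk I) := fun a ha => by
    rw [Ideal.mem_comap, Ideal.Quotient.eq_zero_iff_mem.2 ha]
    exact J.zero_mem
  rw [← Ideal.map_comap_of_surjective _ Ideal.Quotient.mk_surjective J]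
  by_cases htop : J.comap (Ideal.Quotient.mk I) = ⊤
  · exact Or.inr (by rw [htop, Ideal.map_top])
  · left
    rw [le_antisymm (hI.2 ⟨hstable, htop⟩ hle) hle, Ideal.map_quotient_self]

theorem isPseudofield_quotient (hA : IsVonNeumannRegular A) {I : Ideal A}
    (hI : Maximal (fun J : Ideal A => IsStableIdeal G J ∧ J ≠ ⊤) I) :
    letI := hI.prop.1.quotientAction
    IsPseudofield G (A ⧸ I) :=
  ⟨isSimpleDiffRing_quotient hI, hA.of_surjective _ Ideal.Quotient.mk_surjective⟩

end StableIdeal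

theorem IsSimpleDiffRing.injective {R S : Type*} [CommRing R] [MulSemiringAction G R]
    [CommRing S] [MulSemiringAction G S] [Nontrivial S] (hR : IsSimpleDiffRing G R)
    (f : R →+* S) (hf : ∀ (σ : G) (a : R), f (σ • a) = σ • f a) : Function.Injective f := by
  have hker : IsStableIdeal G (RingHom.ker f) := fun σ a ha => by
    rw [RingHom.mem_ker] at ha ⊢
    rw [hf, ha, smul_zero]
  rcases hR.2 _ hker with hbot | htop
  · exact (RingHom.injective_iff_ker_eq_bot f).2 hbot
  · exact absurd (RingHom.mem_ker.1 (htop ▸ Submodule.mem_top : (1 : R) ∈ RingHom.ker f)) (by simp)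

/-- Every simple difference ring can be embedded into a pseudofield. -/
theorem stmt6 {G R : Type u} [Group G] [CommRing R] [MulSemiringAction G R]
    (h : IsSimpleDiffRing G R) :
    ∃ (L : DiffRingExt.{u, u} G) (φ : R →+* L.carrier),
      Function.Injective φ ∧ (∀ (σ : G) (a : R), φ (σ • a) = σ • φ a) ∧
      IsPseudofield G L.carrier := by
  have : Nontrivial R := h.1
  obtain ⟨𝔪, h𝔪⟩ := Ideal.exists_maximal R
  have hK : IsField (R ⧸ 𝔪) := (Ideal.Quotient.maximal_ideal_iff_isField_quotient 𝔪).1 h𝔪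
  have : Nontrivial (R ⧸ 𝔪) := Ideal.Quotient.nontrivial_iff.2 h𝔪.ne_top
  have : Nonempty G := ⟨1⟩
  obtain ⟨I, hI⟩ := exists_maximal_isStableIdeal (G := G) (A := G → R ⧸ 𝔪)
  let := hI.prop.1.quotientAction
  have hpf := isPseudofield_quotient (Pi.isVonNeumannRegular fun _ => hK.isVonNeumannRegular) hI
  let φ := (Ideal.Quotient.mk I).comp (taylorHom G (Ideal.Quotient.mk 𝔪))
  have hφ : ∀ (σ : G) (a : R), φ (σ • a) = σ • φ a := fun σ a => by
    simp only [φ, RingHom.comp_apply, taylorHom_smul, hI.prop.1.mk_smul]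
  have : Nontrivial ((G → R ⧸ 𝔪) ⧸ I) := hpf.1.1
  exact ⟨⟨(G → R ⧸ 𝔪) ⧸ I⟩, φ, h.injective φ hφ, hφ, hpf⟩
end

section
/- Let A be a pseudofield (absolutely flat simple difference ring), and let B and C be nonzero difference A-algebras. Then the difference algebra B ⊗_A C is nonzero. -/
/-!
The structure map of a nonzero difference algebra over a simple difference ring has a Σ-stable
kernel, hence is injective. Localizing the von Neumann regular ring `A` at a maximal ideal gives
a field `k` that is flat over `A`, so `k ⊗[A] B` and `k ⊗[A] C` are nonzero, and `B ⊗[A] C` maps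
to the nonzero ring `(k ⊗[A] B) ⊗[k] (k ⊗[A] C)`.
-/

open MvPolynomial

universe u v

variable {G : Type u} [Group G]

theorem IsSimpleDiffRing.injective_algebraMap {A B : Type*} [CommRing A] [MulSemiringAction G A]
    [CommRing B] [MulSemiringAction G B] [Algebra A B] [Nontrivial B]
    (hA : IsSimpleDiffRing G A)
    (hB : ∀ (σ : G) (a : A), algebraMap A B (σ • a) = σ • algebraMap A B a) :
    Function.Injective (algebraMap A B) := by
  have hker : IsStableIdeal G (RingHom.ker (algebraMap A B)) := fun σ a ha => by
    rw [RingHom.mem_ker] at ha ⊢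
    rw [hB, ha, smul_zero]
  rcases hA.2 _ hker with h | h
  · exact (RingHom.injective_iff_ker_eq_bot _).mpr h
  · exact absurd h (RingHom.ker_ne_top _)

theorem IsLocalization.exists_mul_mul_eq_self {R : Type*} [CommRing R] (M : Submonoid R)
    (S : Type*) [CommRing S] [Algebra R S] [IsLocalization M S]
    (hR : ∀ a : R, ∃ x, a * x * a = a) (z : S) : ∃ y, z * y * z = z := by
  obtain ⟨a, s, rfl⟩ := IsLocalization.exists_mk'_eq M z
  obtain ⟨x, hx⟩ := hR a
  have hx' : algebraMap R S a * algebraMap R S x * algebraMap R S a = algebraMap R S a := by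
    rw [← map_mul, ← map_mul, hx]
  have hs : IsLocalization.mk' S 1 s * algebraMap R S s = 1 := by
    rw [IsLocalization.mk'_spec, map_one]
  refine ⟨algebraMap R S x * algebraMap R S s, ?_⟩
  rw [IsLocalization.mk'_eq_mul_mk'_one]
  linear_combination (algebraMap R S a * algebraMap R S x * algebraMap R S a
      * IsLocalization.mk' S 1 s) * hs + IsLocalization.mk' S 1 s * hx'

theorem IsLocalRing.isField_of_exists_mul_mul_eq_self {R : Type*} [CommRing R] [IsLocalRing R]
    (hR : ∀ a : R, ∃ x, a * x * a = a) : IsField R := by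
  refine ⟨exists_pair_ne R, mul_comm, fun {a} ha => ?_⟩
  obtain ⟨x, hx⟩ := hR a
  rcases IsLocalRing.isUnit_or_isUnit_one_sub_self (x * a) with hxa | hxa
  · exact (isUnit_of_mul_isUnit_right hxa).exists_right_inv
  · -- `a * (1 - x * a) = a - a * x * a = 0`
    exact absurd (hxa.mul_left_eq_zero.mp (by linear_combination -hx)) ha

open TensorProduct in
theorem Algebra.TensorProduct.nontrivial_of_nontrivial_baseChange {A B C : Type*} (k : Type*)
    [CommRing A] [CommRing B] [Algebra A B] [CommRing C] [Algebra A C] [Field k] [Algebra A k]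
    [Nontrivial (k ⊗[A] B)] [Nontrivial (k ⊗[A] C)] : Nontrivial (B ⊗[A] C) :=
  let D := (k ⊗[A] B) ⊗[k] (k ⊗[A] C)
  let f : B →ₐ[A] D := ((includeLeft (S := k)).restrictScalars A).comp includeRight
  let g : C →ₐ[A] D := ((includeRight (R := k)).restrictScalars A).comp includeRight
  (productMap f g).toRingHom.domain_nontrivial

open TensorProduct in
/-- Over a pseudofield `A`, the tensor product of two nonzero difference
`A`-algebras is nonzero. -/
theorem stmt7 {G A B C : Type u} [Group G] [CommRing A] [MulSemiringAction G A]
    [CommRing B] [MulSemiringAction G B] [Algebra A B] [Nontrivial B]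
    [CommRing C] [MulSemiringAction G C] [Algebra A C] [Nontrivial C]
    (hA : IsPseudofield G A)
    (hB : ∀ (σ : G) (a : A), algebraMap A B (σ • a) = σ • algebraMap A B a)
    (hC : ∀ (σ : G) (a : A), algebraMap A C (σ • a) = σ • algebraMap A C a) :
    Nontrivial (B ⊗[A] C) := by
  obtain ⟨hsimple, hregular⟩ := hA
  have := hsimple.1
  obtain ⟨m, hm⟩ := Ideal.exists_maximal A
  let k := Localization.AtPrime m
  let : Field k := IsLocalRing.isField_of_exists_mul_mul_eq_self
    (IsLocalization.exists_mul_mul_eq_self m.primeCompl k hregular) |>.toField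
  have := Algebra.TensorProduct.nontrivial_of_algebraMap_injective_of_flat_left (R := A) k B
    (hsimple.injective_algebraMap hB)
  have := Algebra.TensorProduct.nontrivial_of_algebraMap_injective_of_flat_left (R := A) k C
    (hsimple.injective_algebraMap hC)
  exact Algebra.TensorProduct.nontrivial_of_nontrivial_baseChange k
end

section
/- Let Σ be a group and κ the cardinality of the set of ultrafilters on Σ. Then for every pseudofield L with difference structure given by Σ, the cardinality of Spec L is at most κ. -/
open MvPolynomial

universe u v

variable {G : Type u} [Group G]

/-!
An absolutely flat ring has Krull dimension zero, so every prime of `L` is minimal and hence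
lifts along any injective ring map out of `L`. For a residue field `K = L ⧸ m` the map
`a ↦ (σ ↦ σ • a mod m)` from `L` to `K^Σ` is injective, because its kernel is a `Σ`-stable
ideal. Finally, a prime `Q` of `K^Σ` is determined by the ultrafilter of those `S ⊆ Σ` whose
indicator function is not in `Q`: `f ∈ Q` iff the indicator of the support of `f` is in `Q`.
-/
open Function Cardinal

section PiField

variable {α K : Type*} [Field K]

theorem Ideal.support_indicator_one_mem_iff (I : Ideal (α → K)) (f : α → K) :
    (support f).indicator 1 ∈ I ↔ f ∈ I := by
  have h_inv : (support f).indicator 1 = f * f⁻¹ := by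
    ext a
    by_cases h : f a = 0 <;> simp [h]
  have h_mul : (support f).indicator 1 * f = f := by
    ext a
    by_cases h : f a = 0 <;> simp [h]
  refine ⟨fun hf => h_mul ▸ I.mul_mem_right f hf, fun hf => h_inv ▸ I.mul_mem_right _ hf⟩

theorem Ideal.IsPrime.compl_indicator_one_mem_iff {Q : Ideal (α → K)} (hQ : Q.IsPrime)
    (S : Set α) : Sᶜ.indicator 1 ∈ Q ↔ S.indicator 1 ∉ Q := by
  refine ⟨fun hc hS => hQ.ne_top ?_, fun hS => (hQ.mem_or_mem ?_).resolve_left hS⟩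
  · rw [Ideal.eq_top_iff_one, ← Set.indicator_self_add_compl S 1]
    exact Q.add_mem hS hc
  · rw [← Set.inter_indicator_one, Set.inter_compl_self, Set.indicator_empty]
    exact Q.zero_mem

def PrimeSpectrum.toUltrafilter (p : PrimeSpectrum (α → K)) : Ultrafilter α :=
  Ultrafilter.ofComplNotMemIff
    { sets := {S | S.indicator 1 ∉ p.asIdeal}
      univ_sets := by
        simpa [Set.indicator_univ, Ideal.eq_top_iff_one] using p.2.ne_top
      sets_of_superset := fun {S T} hS hST hT => hS <| by
        rw [← Set.inter_eq_left.mpr hST, Set.inter_indicator_one]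
        exact p.asIdeal.mul_mem_left _ hT
      inter_sets := fun {S T} hS hT hST => by
        rw [Set.inter_indicator_one] at hST
        exact (p.2.mem_or_mem hST).elim hS hT }
    fun S => not_not.trans (p.2.compl_indicator_one_mem_iff S)

theorem PrimeSpectrum.mem_toUltrafilter (p : PrimeSpectrum (α → K)) (S : Set α) :
    S ∈ p.toUltrafilter ↔ S.indicator 1 ∉ p.asIdeal :=
  Iff.rfl

theorem PrimeSpectrum.mem_asIdeal_iff_support_notMem_toUltrafilter
    (p : PrimeSpectrum (α → K)) (f : α → K) :
    f ∈ p.asIdeal ↔ support f ∉ p.toUltrafilter := by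
  rw [mem_toUltrafilter, not_not, p.asIdeal.support_indicator_one_mem_iff]

theorem PrimeSpectrum.toUltrafilter_injective :
    Injective (PrimeSpectrum.toUltrafilter : PrimeSpectrum (α → K) → Ultrafilter α) :=
  fun p q h => PrimeSpectrum.ext <| Ideal.ext fun f => by
    rw [mem_asIdeal_iff_support_notMem_toUltrafilter, mem_asIdeal_iff_support_notMem_toUltrafilter,
      h]

end PiField

theorem Ring.krullDimLE_zero_of_forall_exists_mul_mul_eq {R : Type*} [CommRing R]
    (h : ∀ a : R, ∃ x, a * x * a = a) : Ring.KrullDimLE 0 R := by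
  refine Ring.KrullDimLE.mk₀ fun I hI =>
    Ideal.isMaximal_iff.mpr ⟨(Ideal.ne_top_iff_one I).mp hI.ne_top, fun J a hIJ ha haJ => ?_⟩
  obtain ⟨x, hx⟩ := h a
  have h_zero : a * (x * a - 1) ∈ I := by
    rw [mul_sub, mul_one, ← mul_assoc, hx, sub_self]
    exact I.zero_mem
  have h_sub : x * a - 1 ∈ J := hIJ ((hI.mem_or_mem h_zero).resolve_left ha)
  simpa using J.sub_mem (J.mul_mem_left x haJ) h_sub

theorem PrimeSpectrum.comap_surjective_of_injective {R S : Type*} [CommRing R] [CommRing S]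
    [Ring.KrullDimLE 0 R] {f : R →+* S} (hf : Injective f) : Surjective (comap f) := fun p => by
  obtain ⟨Q, hQ, hQp⟩ := Ideal.exists_comap_eq_of_mem_minimalPrimes_of_injective hf p.asIdeal
    (Ideal.mem_minimalPrimes_of_krullDimLE_zero p.asIdeal)
  exact ⟨⟨Q, hQ⟩, PrimeSpectrum.ext hQp⟩

section Orbit

variable (G) {R : Type v} {K : Type*} [CommRing R] [MulSemiringAction G R] [CommRing K]

/-- The map `L → F(K) = K^Σ` attached to a residue map `φ : L → K`. -/
def orbitRingHom (φ : R →+* K) : R →+* (G → K) :=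
  RingHom.pi fun σ => φ.comp (MulSemiringAction.toRingHom G R σ)

theorem orbitRingHom_apply (φ : R →+* K) (a : R) (σ : G) :
    orbitRingHom G φ a σ = φ (σ • a) :=
  rfl

theorem isStableIdeal_ker_orbitRingHom (φ : R →+* K) :
    IsStableIdeal G (RingHom.ker (orbitRingHom G φ)) := by
  intro τ a ha
  rw [RingHom.mem_ker] at ha ⊢
  funext σ
  rw [orbitRingHom_apply, ← mul_smul, ← orbitRingHom_apply, ha, Pi.zero_apply, Pi.zero_apply]

theorem orbitRingHom_injective [Nontrivial K] (hR : IsSimpleDiffRing G R) (φ : R →+* K) :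
    Injective (orbitRingHom G φ) := by
  refine (RingHom.injective_iff_ker_eq_bot _).mpr <|
    (hR.2 _ (isStableIdeal_ker_orbitRingHom G φ)).resolve_right fun h => ?_
  have h_one : (1 : R) ∈ RingHom.ker (orbitRingHom G φ) := h ▸ Submodule.mem_top
  rw [RingHom.mem_ker, map_one] at h_one
  exact one_ne_zero h_one

end Orbit

/-- For a pseudofield `L` over `Σ = G`, `|Spec L|` is at most the number of
ultrafilters on `G`. -/
theorem stmt9 {G L : Type u} [Group G] [CommRing L] [MulSemiringAction G L]
    (hL : IsPseudofield G L) :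
    Cardinal.mk (PrimeSpectrum L) ≤ Cardinal.mk (Ultrafilter G) := by
  obtain ⟨hsimple, hregular⟩ := hL
  have : Ring.KrullDimLE 0 L := Ring.krullDimLE_zero_of_forall_exists_mul_mul_eq hregular
  have : Nontrivial L := hsimple.1
  obtain ⟨m, hm⟩ := Ideal.exists_maximal L
  let := Ideal.Quotient.field m
  calc #(PrimeSpectrum L) ≤ #(PrimeSpectrum (G → L ⧸ m)) :=
        mk_le_of_surjective (PrimeSpectrum.comap_surjective_of_injective
          (orbitRingHom_injective G hsimple (Ideal.Quotient.mk m)))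
    _ ≤ #(Ultrafilter G) := mk_le_of_injective PrimeSpectrum.toUltrafilter_injective
end

section
/- Let Σ be an infinite group, κ the cardinality of the set of ultrafilters on Σ, and K a pseudofield. Then the partially ordered set of radical difference ideals of K{y₁,…,yₙ} (ordered by inclusion) is (|Σ|·κ)-noetherian: every strictly ascending chain of radical difference ideals has cardinality at most |Σ|·κ. -/
open MvPolynomial

universe u v

variable {G : Type u} [Group G]

def IsKNoetherian (S : Type u) [Preorder S] (κ : Cardinal.{u}) : Prop :=
  ∀ (ι : Type u) [LinearOrder ι] (f : ι → S), StrictMono f → Cardinal.mk ι ≤ κ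

/-!
An ideal of `K{y₁,…,yₙ}` is a `K`-submodule, and a submodule of a module spanned by `v : B → M` is
determined by its preimages under the maps `K^s → M` given by `v` on finite `s ⊆ B`. A chain of
submodules of `K^N` has at most `#(Ideal K) ^ N` members (dévissage along
`0 → K → K^(N+1) → K^N → 0`). A pseudofield is von Neumann regular, so an ideal is determined by
its idempotents, and an idempotent `e` is determined by `{σ | σ • e ∈ 𝔪}` for a maximal ideal `𝔪`,
because the only stable ideal inside `𝔪` is `0`. Hence a chain of ideals has at most
`((2 ^ 2 ^ |Σ|) ^ ℵ₀) ^ |Σ| = 2 ^ 2 ^ |Σ|` members, which is at most `κ` by Pospíšil's theorem,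
proved with the independent family `X ↦ {(s, A) | s ∩ X ∈ A}` on `Finset Σ × Finset (Finset Σ)`.
-/

open Cardinal

section IndependentFamily

variable {ι β α : Type u}

def IsIndependentFamily (E : ι → Set β) : Prop :=
  ∀ (T : Finset ι) (S : Set ι), ∃ b : β, ∀ i : ι, i ∈ T → (b ∈ E i ↔ i ∈ S)

namespace IsIndependentFamily

variable {E : ι → Set β}

theorem preimage (hE : IsIndependentFamily E) {e : α → β}
    (he : Function.Surjective e) : IsIndependentFamily fun i => e ⁻¹' E i := fun T S => by
  obtain ⟨b, hb⟩ := hE T S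
  obtain ⟨a, rfl⟩ := he b
  exact ⟨a, hb⟩

theorem exists_ultrafilter (hE : IsIndependentFamily E) (S : Set ι) :
    ∃ F : Ultrafilter β, ∀ i, E i ∈ F ↔ i ∈ S := by
  classical
  let sel : ι → Set β := fun i => if i ∈ S then E i else (E i)ᶜ
  obtain ⟨F, hF⟩ := Ultrafilter.exists_ultrafilter_of_finite_inter_nonempty (Set.range sel) <| by
    intro T hT
    rw [← Set.image_univ, Finset.subset_set_image_iff] at hT
    obtain ⟨T', -, rfl⟩ := hT
    obtain ⟨b, hb⟩ := hE T' S
    refine ⟨b, ?_⟩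
    simp only [Finset.coe_image, Set.sInter_image, Set.mem_iInter, Finset.mem_coe]
    intro i hi
    by_cases h : i ∈ S <;> simp [sel, h, hb i hi]
  refine ⟨F, fun i => ?_⟩
  have hsel : sel i ∈ F := hF ⟨i, rfl⟩
  by_cases h : i ∈ S
  · simpa [sel, h] using hsel
  · simpa [sel, h, Ultrafilter.compl_mem_iff_notMem] using hsel

theorem two_power_le_mk_ultrafilter (hE : IsIndependentFamily E) : 2 ^ #ι ≤ #(Ultrafilter β) := by
  rw [← mk_set]
  refine mk_le_of_surjective (f := fun F : Ultrafilter β => {i | E i ∈ F}) fun S => ?_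
  obtain ⟨F, hF⟩ := hE.exists_ultrafilter S
  exact ⟨F, Set.ext hF⟩

end IsIndependentFamily

end IndependentFamily

section Pospisil

variable {α : Type u}

theorem exists_finset_injOn_inter (T : Finset (Set α)) :
    ∃ s : Finset α, Set.InjOn (fun X => (s : Set α) ∩ X) (T : Set (Set α)) := by
  have hpair (X Y : Set α) : ∃ t : Finset α, ↑t ∩ X = ↑t ∩ Y → X = Y := by
    by_cases hXY : X = Y
    · exact ⟨∅, fun _ => hXY⟩
    obtain ⟨a, ha⟩ : ∃ a, ¬(a ∈ X ↔ a ∈ Y) := by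
      by_contra! h
      exact hXY (Set.ext h)
    refine ⟨{a}, fun h => absurd ?_ ha⟩
    simpa using Set.ext_iff.1 h a
  choose t ht using hpair
  classical
  refine ⟨(T ×ˢ T).biUnion fun p => t p.1 p.2, fun X hX Y hY h => ht X Y (Set.ext fun a => ?_)⟩
  have has : a ∈ t X Y → a ∈ (T ×ˢ T).biUnion fun p => t p.1 p.2 := fun ha =>
    Finset.mem_biUnion.2 ⟨(X, Y), Finset.mem_product.2 ⟨hX, hY⟩, ha⟩
  have := Set.ext_iff.1 h a
  simp only [Set.mem_inter_iff, Finset.mem_coe] at this ⊢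
  exact ⟨fun ⟨ha, hXa⟩ => ⟨ha, (this.1 ⟨has ha, hXa⟩).2⟩,
    fun ⟨ha, hYa⟩ => ⟨ha, (this.2 ⟨has ha, hYa⟩).2⟩⟩

def traceFamily (X : Set α) : Set (Finset α × Finset (Finset α)) :=
  {p | ∃ t ∈ p.2, (t : Set α) = ↑p.1 ∩ X}

theorem isIndependentFamily_traceFamily : IsIndependentFamily (traceFamily (α := α)) := by
  intro T S
  classical
  obtain ⟨s, hs⟩ := exists_finset_injOn_inter T
  refine ⟨(s, {Y ∈ T | Y ∈ S}.image fun Y => {a ∈ s | a ∈ Y}), fun X hX => ?_⟩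
  simp only [traceFamily, Set.mem_ofPred_eq, Finset.mem_image, Finset.mem_filter]
  constructor
  · rintro ⟨_, ⟨Y, ⟨hY, hYS⟩, rfl⟩, hYX⟩
    rwa [← hs hY hX (by rwa [Finset.coe_filter] at hYX)]
  · intro hXS
    exact ⟨_, ⟨X, ⟨hX, hXS⟩, rfl⟩, Finset.coe_filter _ _⟩

theorem mk_finset_prod_finset_finset [Infinite α] : #(Finset α × Finset (Finset α)) = #α := by
  simp [mk_finset_of_infinite, mul_eq_self (aleph0_le_mk α)]

theorem two_power_two_power_le_mk_ultrafilter [Infinite α] :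
    (2 : Cardinal) ^ (2 : Cardinal) ^ #α ≤ #(Ultrafilter α) := by
  obtain ⟨e⟩ := Cardinal.eq.1 (mk_finset_prod_finset_finset (α := α)).symm
  rw [← mk_set]
  exact (isIndependentFamily_traceFamily.preimage e.surjective).two_power_le_mk_ultrafilter

end Pospisil

theorem LinearMap.exact_single_none_funLeft_some (R α : Type u) [Ring R] [DecidableEq α] :
    Function.Exact (LinearMap.single R (fun _ : Option α => R) none)
      (LinearMap.funLeft R R (some : α → Option α)) := fun x => by
  constructor
  · intro hx
    refine ⟨x none, funext fun i => ?_⟩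
    cases i with
    | none => simp
    | some a => simpa using (congrFun hx a).symm
  · rintro ⟨r, rfl⟩
    ext a
    simp

namespace Submodule

section Exact

variable {R M N P : Type u} [Ring R] [AddCommGroup M] [Module R M] [AddCommGroup N] [Module R N]
  [AddCommGroup P] [Module R P] {g : P →ₗ[R] M} {f : M →ₗ[R] N}

theorem eq_of_le_of_comap_eq_of_map_eq (hgf : Function.Exact g f) {U U' : Submodule R M}
    (hle : U ≤ U') (hcomap : U.comap g = U'.comap g) (hmap : U.map f = U'.map f) : U = U' := by
  refine le_antisymm hle fun x hx => ?_
  obtain ⟨y, hy, hyx⟩ : f x ∈ U.map f := hmap ▸ mem_map_of_mem hx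
  obtain ⟨z, hz⟩ := (hgf (x - y)).1 (by simp [hyx])
  have hzU : z ∈ U.comap g := hcomap ▸ show g z ∈ U' by rw [hz]; exact U'.sub_mem hx (hle hy)
  simpa [hz] using U.add_mem hzU hy

theorem mk_le_mul_of_isChain_of_exact (hgf : Function.Exact g f) {C : Set (Submodule R M)}
    (hC : IsChain (· ≤ ·) C) : #C ≤ #(Submodule R P) * #(map f '' C) := by
  rw [← lift_id #(Submodule R P), ← lift_id #(map f '' C), ← mk_prod]
  refine mk_le_of_injective (f := fun U : C => (U.1.comap g, ⟨U.1.map f, U.1, U.2, rfl⟩))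
    fun U V hUV => ?_
  obtain ⟨hcomap, hmap⟩ := Prod.mk.inj hUV
  replace hmap := congrArg Subtype.val hmap
  rcases hC.total U.2 V.2 with hle | hle
  · exact Subtype.ext (eq_of_le_of_comap_eq_of_map_eq hgf hle hcomap hmap)
  · exact Subtype.ext (eq_of_le_of_comap_eq_of_map_eq hgf hle hcomap.symm hmap.symm).symm

end Exact

theorem mk_le_of_isChain_pi (R ι : Type u) [Ring R] [Finite ι] {C : Set (Submodule R (ι → R))}
    (hC : IsChain (· ≤ ·) C) : #C ≤ #(Ideal R) ^ Nat.card ι := by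
  refine Finite.induction_empty_option (P := fun ι => ∀ C : Set (Submodule R (ι → R)),
    IsChain (· ≤ ·) C → #C ≤ #(Ideal R) ^ Nat.card ι) ?_ ?_ ?_ ι C hC
  · intro α β e ih C hC
    let F := orderIsoMapComap (LinearEquiv.funCongrLeft R R e)
    rw [← mk_image_eq F.injective, ← Nat.card_congr e]
    exact ih _ (hC.image F)
  · intro C _
    simpa using mk_le_one_iff_set_subsingleton.2 (Set.subsingleton_of_subsingleton (s := C))
  · intro α _ ih C hC
    classical
    calc #C ≤ #(Ideal R) * #(map (LinearMap.funLeft R R some) '' C) :=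
          mk_le_mul_of_isChain_of_exact (LinearMap.exact_single_none_funLeft_some R α) hC
      _ ≤ #(Ideal R) * #(Ideal R) ^ Nat.card α :=
          mul_le_mul_right (ih _ (Monotone.isChain_image (fun _ _ => map_mono) hC)) _
      _ = #(Ideal R) ^ Nat.card (Option α) := by rw [Finite.card_option, pow_succ']

section SpanningFamily

variable {R M B : Type u} [Ring R] [AddCommGroup M] [Module R M] {v : B → M}

theorem le_of_forall_comap_linearCombination_le (hv : span R (Set.range v) = ⊤)
    {U U' : Submodule R M}
    (h : ∀ s : Finset B, U.comap (Fintype.linearCombination R fun i : s => v i) ≤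
      U'.comap (Fintype.linearCombination R fun i : s => v i)) : U ≤ U' := by
  intro x hx
  obtain ⟨c, rfl⟩ :=
    Finsupp.mem_span_range_iff_exists_finsupp.1 (hv ▸ mem_top : x ∈ span R (Set.range v))
  have hc : Fintype.linearCombination R (fun i : c.support => v i) (fun i => c i) =
      c.sum fun i a => a • v i := by
    rw [Fintype.linearCombination_apply, Finsupp.sum, ← Finset.sum_coe_sort c.support]
  rw [← hc] at hx ⊢
  exact h c.support hx

theorem mk_le_of_isChain_of_span_eq_top (hv : span R (Set.range v) = ⊤)
    {C : Set (Submodule R M)} (hC : IsChain (· ≤ ·) C) :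
    #C ≤ (#(Ideal R) ^ ℵ₀) ^ #(Finset B) := by
  let trace (s : Finset B) (U : Submodule R M) : Submodule R (s → R) :=
    U.comap (Fintype.linearCombination R fun i : s => v i)
  have htrace : Function.Injective fun U s => trace s U := fun U U' h =>
    le_antisymm (le_of_forall_comap_linearCombination_le hv fun s => (congrFun h s).le)
      (le_of_forall_comap_linearCombination_le hv fun s => (congrFun h s).ge)
  calc #C ≤ #(∀ s : Finset B, trace s '' C) :=
        mk_le_of_injective (f := fun U s => ⟨trace s U, Set.mem_image_of_mem _ U.2⟩)
          fun U U' h => Subtype.ext <| htrace <| funext fun s => congrArg Subtype.val (congrFun h s)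
    _ = Cardinal.prod fun s : Finset B => #(trace s '' C) := mk_pi _
    _ ≤ Cardinal.prod fun _ : Finset B => #(Ideal R) ^ ℵ₀ := prod_le_prod _ _ fun s : Finset B => by
        refine (mk_le_of_isChain_pi R {i // i ∈ s}
          (Monotone.isChain_image (fun _ _ => comap_mono) hC)).trans ?_
        rw [← power_natCast]
        exact power_le_power_left (mk_ne_zero _) natCast_lt_aleph0.le
    _ = (#(Ideal R) ^ ℵ₀) ^ #(Finset B) := prod_const' _ _

end SpanningFamily

end Submodule

section Pseudofield

variable {R : Type u} [CommRing R] [MulSemiringAction G R]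

theorem IsSimpleDiffRing.eq_zero_of_forall_smul_mem (hR : IsSimpleDiffRing G R) {P : Ideal R}
    (hP : P ≠ ⊤) {a : R} (ha : ∀ σ : G, σ • a ∈ P) : a = 0 := by
  let N : Ideal R := ⨅ σ : G, P.comap (MulSemiringAction.toRingHom G R σ)
  have hN (b : R) : b ∈ N ↔ ∀ σ : G, σ • b ∈ P := Submodule.mem_iInf _
  have hstable : IsStableIdeal G N := fun σ b hb =>
    (hN _).2 fun τ => by rw [smul_smul]; exact (hN b).1 hb _
  rcases hR.2 N hstable with hbot | htop
  · exact (Submodule.mem_bot R).1 (hbot ▸ (hN a).2 ha)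
  · refine absurd ((Ideal.eq_top_iff_one P).2 ?_) hP
    simpa using (hN 1).1 (htop ▸ Submodule.mem_top) 1

theorem IsIdempotentElem.one_sub_mem_of_notMem {P : Ideal R} [P.IsPrime] {e : R}
    (he : IsIdempotentElem e) (heP : e ∉ P) : 1 - e ∈ P := by
  have h0 : e * (1 - e) ∈ P := by rw [mul_sub, mul_one, he.eq, sub_self]; exact P.zero_mem
  exact (Ideal.IsPrime.mem_or_mem ‹_› h0).resolve_left heP

theorem IsSimpleDiffRing.mk_idempotents_le (hR : IsSimpleDiffRing G R) :
    #{e : R // IsIdempotentElem e} ≤ 2 ^ #G := by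
  have := hR.1
  obtain ⟨P, hP⟩ := Ideal.exists_maximal R
  rw [← mk_set]
  refine mk_le_of_injective (f := fun e => {σ : G | σ • e.1 ∈ P}) fun e f hef =>
    Subtype.ext <| sub_eq_zero.1 <| hR.eq_zero_of_forall_smul_mem hP.ne_top fun σ => ?_
  have hσ : σ • e.1 ∈ P ↔ σ • f.1 ∈ P := Set.ext_iff.1 hef σ
  have he : IsIdempotentElem (σ • e.1) := e.2.map (MulSemiringAction.toRingHom G R σ)
  have hf : IsIdempotentElem (σ • f.1) := f.2.map (MulSemiringAction.toRingHom G R σ)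
  rw [smul_sub]
  by_cases heP : σ • e.1 ∈ P
  · exact P.sub_mem heP (hσ.1 heP)
  · have h := P.sub_mem (hf.one_sub_mem_of_notMem (heP ∘ hσ.2)) (he.one_sub_mem_of_notMem heP)
    rwa [sub_sub_sub_cancel_left] at h

theorem mk_ideal_le_of_vonNeumannRegular (hR : ∀ a : R, ∃ x, a * x * a = a) :
    #(Ideal R) ≤ 2 ^ #{e : R // IsIdempotentElem e} := by
  have hle (I J : Ideal R) (h : {e : {e : R // IsIdempotentElem e} | e.1 ∈ I} = {e | e.1 ∈ J}) :
      I ≤ J := fun a ha => by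
    obtain ⟨x, hx⟩ := hR a
    have hidem : IsIdempotentElem (a * x) := by
      rw [IsIdempotentElem, show a * x * (a * x) = a * x * a * x by ring, hx]
    have hJ : a * x ∈ J := (Set.ext_iff.1 h ⟨a * x, hidem⟩).1 (I.mul_mem_right x ha)
    simpa [hx] using J.mul_mem_right a hJ
  rw [← mk_set]
  exact mk_le_of_injective (f := fun I => {e | e.1 ∈ I}) fun I J h =>
    le_antisymm (hle I J h) (hle J I h.symm)

theorem IsPseudofield.mk_ideal_le (hR : IsPseudofield G R) :
    #(Ideal R) ≤ (2 : Cardinal) ^ (2 : Cardinal) ^ #G :=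
  (mk_ideal_le_of_vonNeumannRegular hR.2).trans
    (power_le_power_left two_ne_zero hR.1.mk_idempotents_le)

end Pseudofield

namespace Cardinal

theorem mk_finset_le_max (α : Type u) : #(Finset α) ≤ max ℵ₀ #α := by
  classical
  exact (mk_le_of_surjective List.toFinset_surjective).trans (mk_list_le_max α)

theorem mk_finset_finsupp_le (G : Type u) [Infinite G] (n : ℕ) :
    #(Finset ((G × Fin n) →₀ ℕ)) ≤ #G := by
  have hfinset {X : Type u} (hX : #X ≤ #G) : #(Finset X) ≤ #G :=
    (mk_finset_le_max X).trans (max_le (aleph0_le_mk G) hX)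
  refine hfinset <| (mk_le_of_injective (Finsupp.graph_injective _ ℕ)).trans (hfinset ?_)
  simpa using mul_le_of_le (aleph0_le_mk G)
    (mul_le_of_le (aleph0_le_mk G) le_rfl (natCast_lt_aleph0.le.trans (aleph0_le_mk G)))
    (aleph0_le_mk G)

theorem power_aleph0_power_le {a c d : Cardinal.{u}} (hc : ℵ₀ ≤ c) (ha : a ≤ 2 ^ c) (hd : d ≤ c) :
    (a ^ ℵ₀) ^ d ≤ 2 ^ c :=
  calc (a ^ ℵ₀) ^ d ≤ ((2 ^ c) ^ ℵ₀) ^ d := power_le_power_right (power_le_power_right ha)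
    _ = 2 ^ (c * ℵ₀ * d) := by rw [power_mul, power_mul]
    _ ≤ 2 ^ c := power_le_power_left two_ne_zero (mul_le_of_le hc (mul_le_of_le hc le_rfl hc) hd)

end Cardinal

/-- For an infinite group `G` and a pseudofield `K`, the poset of radical difference
ideals of `K{y₁,…,yₙ}` is `(|G|·κ)`-noetherian, where `κ` is the number of
ultrafilters on `G`. -/
theorem stmt15 {G K : Type u} [Group G] [Infinite G] [CommRing K] [MulSemiringAction G K]
    (hK : IsPseudofield G K) (n : ℕ) :
    IsKNoetherian { I : Ideal (MvPolynomial (G × Fin n) K) // IsDiffIdeal I ∧ I.IsRadical }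
      (Cardinal.mk G * Cardinal.mk (Ultrafilter G)) := by
  intro ι _ f hf
  let ideal (i : ι) : Submodule K (MvPolynomial (G × Fin n) K) := (f i).1.restrictScalars K
  have hideal : StrictMono ideal := fun i j hij => hf hij
  have hG : ℵ₀ ≤ (2 : Cardinal) ^ #G := (aleph0_le_mk G).trans (cantor _).le
  calc #ι = #(Set.range ideal) := (mk_range_eq _ hideal.injective).symm
    _ ≤ (#(Ideal K) ^ ℵ₀) ^ #(Finset ((G × Fin n) →₀ ℕ)) :=
        Submodule.mk_le_of_isChain_of_span_eq_top (basisMonomials _ K).span_eq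
          hideal.monotone.isChain_range
    _ ≤ 2 ^ 2 ^ #G := power_aleph0_power_le hG hK.mk_ideal_le
        ((mk_finset_finsupp_le G n).trans (cantor _).le)
    _ ≤ #(Ultrafilter G) := two_power_two_power_le_mk_ultrafilter
    _ ≤ #G * #(Ultrafilter G) := le_mul_left (mk_ne_zero G)
end
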